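/- arXiv:2005.12029 — 6 statements merged into one kernel-verified Lean document; each statement's English description precedes it below -/
import Mathlib

section
/- Let C be a category with an initial object k and binary coproducts, and let (H, Δ, ε, S) be a Zhang algebra of C. Then for every object A of C, the set Hom_C(H, A) is a group under the convolution product f ∗ g := (f ⊔̇ g) ∘ Δ, with identity element η_A ∘ ε, and with the inverse of any f given by f ∘ S. -/
open CategoryTheory CategoryTheory.Limits

universe u v

/-! Convolution `f ∗ g = Δ ≫ coprod.desc f g` is associative by coassociativity of `Δ`; the left
counit and left antipode axioms, composed with `f`, say that `η_A ∘ ε` is a left unit and `S ≫ f` a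
left inverse of `f`. A semigroup with a left unit and left inverses is already a group. -/

namespace CategoryTheory.Limits

variable {C : Type u} [Category.{v} C]

theorem coprod.desc_desc_eq_associator_hom_comp [HasBinaryCoproducts C] {X Y Z A : C}
    (f : X ⟶ A) (g : Y ⟶ A) (h : Z ⟶ A) :
    coprod.desc (coprod.desc f g) h =
      (coprod.associator X Y Z).hom ≫ coprod.desc f (coprod.desc g h) := by
  simp only [coprod.associator_hom, coprod.desc_comp, Category.assoc, coprod.inl_desc,
    coprod.inr_desc]

end CategoryTheory.Limits

section Convolution

variable {C : Type u} [Category.{v} C] [HasBinaryCoproducts C] {H A : C} (Δ : H ⟶ H ⨿ H)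

theorem convolution_assoc
    (hcoassoc : Δ ≫ coprod.map Δ (𝟙 H) ≫ (coprod.associator H H H).hom
      = Δ ≫ coprod.map (𝟙 H) Δ)
    (f g h : H ⟶ A) :
    Δ ≫ coprod.desc (Δ ≫ coprod.desc f g) h = Δ ≫ coprod.desc f (Δ ≫ coprod.desc g h) :=
  calc Δ ≫ coprod.desc (Δ ≫ coprod.desc f g) h
      = Δ ≫ coprod.map Δ (𝟙 H) ≫ coprod.desc (coprod.desc f g) h := by
        rw [coprod.map_desc, Category.id_comp]
    _ = (Δ ≫ coprod.map Δ (𝟙 H) ≫ (coprod.associator H H H).hom) ≫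
          coprod.desc f (coprod.desc g h) := by
        rw [coprod.desc_desc_eq_associator_hom_comp]
        simp only [Category.assoc]
    _ = Δ ≫ coprod.desc f (Δ ≫ coprod.desc g h) := by
        rw [hcoassoc, Category.assoc, coprod.map_desc, Category.id_comp]

variable [HasInitial C] (ε : H ⟶ ⊥_ C)

theorem convolution_counit_left (hcounit_l : Δ ≫ coprod.desc (ε ≫ initial.to H) (𝟙 H) = 𝟙 H)
    (f : H ⟶ A) : Δ ≫ coprod.desc (ε ≫ initial.to A) f = f :=
  calc Δ ≫ coprod.desc (ε ≫ initial.to A) f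
      = (Δ ≫ coprod.desc (ε ≫ initial.to H) (𝟙 H)) ≫ f := by
        rw [Category.assoc, coprod.desc_comp, Category.assoc, initial.to_comp, Category.id_comp]
    _ = f := by rw [hcounit_l, Category.id_comp]

theorem convolution_antipode_left {S : H ⟶ H}
    (hantipode_l : Δ ≫ coprod.desc S (𝟙 H) = ε ≫ initial.to H) (f : H ⟶ A) :
    Δ ≫ coprod.desc (S ≫ f) f = ε ≫ initial.to A :=
  calc Δ ≫ coprod.desc (S ≫ f) f
      = (Δ ≫ coprod.desc S (𝟙 H)) ≫ f := by
        rw [Category.assoc, coprod.desc_comp, Category.id_comp]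
    _ = ε ≫ initial.to A := by rw [hantipode_l, Category.assoc, initial.to_comp]

end Convolution

theorem zhang_hom_group_general {C : Type u} [Category.{v} C] [HasInitial C] [HasBinaryCoproducts C]
    (H : C) (Δ : H ⟶ H ⨿ H) (ε : H ⟶ ⊥_ C) (S : H ⟶ H)
    (hcoassoc : Δ ≫ coprod.map Δ (𝟙 H) ≫ (coprod.associator H H H).hom
      = Δ ≫ coprod.map (𝟙 H) Δ)
    (hcounit_l : Δ ≫ coprod.desc (ε ≫ initial.to H) (𝟙 H) = 𝟙 H)
    (hantipode_l : Δ ≫ coprod.desc S (𝟙 H) = ε ≫ initial.to H)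
    (A : C) :
    ∃ grp : Group (H ⟶ A),
      (∀ f g : H ⟶ A, (letI := grp; f * g) = Δ ≫ coprod.desc f g) ∧
      ((letI := grp; (1 : H ⟶ A)) = ε ≫ initial.to A) ∧
      (∀ f : H ⟶ A, (letI := grp; f⁻¹) = S ≫ f) := by
  let : Mul (H ⟶ A) := ⟨fun f g => Δ ≫ coprod.desc f g⟩
  let : One (H ⟶ A) := ⟨ε ≫ initial.to A⟩
  let : Inv (H ⟶ A) := ⟨fun f => S ≫ f⟩
  exact ⟨Group.ofLeftAxioms (convolution_assoc Δ hcoassoc) (convolution_counit_left Δ ε hcounit_l)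
    (convolution_antipode_left Δ ε hantipode_l), fun _ _ => rfl, rfl, fun _ => rfl⟩

/-- Let `C` be a category with an initial object and binary coproducts and
`(H, Δ, ε, S)` a Zhang algebra of `C`. Then for every object `A`, the hom-set `H ⟶ A`
is a group under the convolution product `f ∗ g := (f ⊔̇ g) ∘ Δ`, with identity `η_A ∘ ε`
and inverse `f ∘ S`. -/
theorem zhang_hom_group {C : Type u} [Category.{v} C] [HasInitial C] [HasBinaryCoproducts C]
    (H : C) (Δ : H ⟶ H ⨿ H) (ε : H ⟶ ⊥_ C) (S : H ⟶ H)
    (hcoassoc : Δ ≫ coprod.map Δ (𝟙 H) ≫ (coprod.associator H H H).hom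
      = Δ ≫ coprod.map (𝟙 H) Δ)
    (hcounit_l : Δ ≫ coprod.desc (ε ≫ initial.to H) (𝟙 H) = 𝟙 H)
    (hcounit_r : Δ ≫ coprod.desc (𝟙 H) (ε ≫ initial.to H) = 𝟙 H)
    (hantipode_l : Δ ≫ coprod.desc S (𝟙 H) = ε ≫ initial.to H)
    (hantipode_r : Δ ≫ coprod.desc (𝟙 H) S = ε ≫ initial.to H)
    (A : C) :
    ∃ grp : Group (H ⟶ A),
      (∀ f g : H ⟶ A, (letI := grp; f * g) = Δ ≫ coprod.desc f g) ∧
      ((letI := grp; (1 : H ⟶ A)) = ε ≫ initial.to A) ∧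
      (∀ f : H ⟶ A, (letI := grp; f⁻¹) = S ≫ f) :=
  zhang_hom_group_general H Δ ε S hcoassoc hcounit_l hantipode_l A
end

section
/- Let C be a category with an initial object k and binary coproducts, and let (H, Δ, ε, S) be a Zhang algebra of C. Let τ : H ⊔ H → H ⊔ H denote the canonical symmetry isomorphism exchanging the two coproduct factors (τ = ι₂ ⊔̇ ι₁, where ι₁, ι₂ : H → H ⊔ H are the coproduct injections). Then the antipode is an anti-comorphism: τ ∘ (S ⊔ S) ∘ Δ = Δ ∘ S. -/
/-!
For every object `X`, the comultiplication turns `H ⟶ X` into a monoid under the convolution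
`f ⋆ g = Δ ≫ (f ⊔̇ g)`, with unit `ε ≫ η_X`, and postcomposition with any `φ : H ⟶ X` makes
`S ≫ φ` a two-sided inverse of `φ`. In `H ⟶ H ⨿ H` we have `Δ = ι₁ ⋆ ι₂`, so
`τ ∘ (S ⊔ S) ∘ Δ = (S ≫ ι₂) ⋆ (S ≫ ι₁)` is a left inverse of `Δ`, while `S ≫ Δ` is a right
inverse of `Δ`; in a monoid the two must agree.
-/

open CategoryTheory CategoryTheory.Limits

universe u v

section Convolution

variable {C : Type u} [Category.{v} C] {H X Y : C}

noncomputable def coprodConvUnit [HasInitial C] (ε : H ⟶ ⊥_ C) (X : C) : H ⟶ X :=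
  ε ≫ initial.to X

lemma coprodConvUnit_comp [HasInitial C] {ε : H ⟶ ⊥_ C} (φ : X ⟶ Y) :
    coprodConvUnit ε X ≫ φ = coprodConvUnit ε Y := by
  rw [coprodConvUnit, Category.assoc, initial.to_comp, coprodConvUnit]

variable [HasBinaryCoproducts C]

noncomputable def coprodConv (Δ : H ⟶ H ⨿ H) (f g : H ⟶ X) : H ⟶ X := Δ ≫ coprod.desc f g

variable {Δ : H ⟶ H ⨿ H}

lemma coprodConv_comp (f g : H ⟶ X) (φ : X ⟶ Y) :
    coprodConv Δ f g ≫ φ = coprodConv Δ (f ≫ φ) (g ≫ φ) := by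
  simp [coprodConv]

lemma coprodConv_inl_inr : coprodConv Δ coprod.inl coprod.inr = Δ := by
  rw [coprodConv, coprod.desc_inl_inr, Category.comp_id]

lemma coprodConv_assoc
    (hcoassoc : Δ ≫ coprod.map Δ (𝟙 H) ≫ (coprod.associator H H H).hom
      = Δ ≫ coprod.map (𝟙 H) Δ) (f g h : H ⟶ X) :
    coprodConv Δ (coprodConv Δ f g) h = coprodConv Δ f (coprodConv Δ g h) :=
  calc Δ ≫ coprod.desc (Δ ≫ coprod.desc f g) h
        = Δ ≫ coprod.map Δ (𝟙 H) ≫ (coprod.associator H H H).hom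
            ≫ coprod.desc f (coprod.desc g h) := by
        simp only [coprod.associator, coprod.map_desc, coprod.desc_comp, Category.assoc,
          coprod.inl_desc, coprod.inr_desc, Category.id_comp]
    _ = Δ ≫ coprod.map (𝟙 H) Δ ≫ coprod.desc f (coprod.desc g h) := by
        rw [reassoc_of% hcoassoc]
    _ = Δ ≫ coprod.desc f (Δ ≫ coprod.desc g h) := by rw [coprod.map_desc, Category.id_comp]

variable [HasInitial C] {ε : H ⟶ ⊥_ C}

lemma coprodConvUnit_coprodConv
    (hcounit_l : Δ ≫ coprod.desc (ε ≫ initial.to H) (𝟙 H) = 𝟙 H) (f : H ⟶ X) :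
    coprodConv Δ (coprodConvUnit ε X) f = f :=
  calc coprodConv Δ (coprodConvUnit ε X) f = coprodConv Δ (coprodConvUnit ε H) (𝟙 H) ≫ f := by
        rw [coprodConv_comp, coprodConvUnit_comp, Category.id_comp]
    _ = f := by rw [coprodConv, coprodConvUnit, hcounit_l, Category.id_comp]

lemma coprodConv_coprodConvUnit
    (hcounit_r : Δ ≫ coprod.desc (𝟙 H) (ε ≫ initial.to H) = 𝟙 H) (f : H ⟶ X) :
    coprodConv Δ f (coprodConvUnit ε X) = f :=
  calc coprodConv Δ f (coprodConvUnit ε X) = coprodConv Δ (𝟙 H) (coprodConvUnit ε H) ≫ f := by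
        rw [coprodConv_comp, coprodConvUnit_comp, Category.id_comp]
    _ = f := by rw [coprodConv, coprodConvUnit, hcounit_r, Category.id_comp]

lemma coprodConv_antipode_comp_self {S : H ⟶ H}
    (hantipode_l : Δ ≫ coprod.desc S (𝟙 H) = ε ≫ initial.to H) (φ : H ⟶ X) :
    coprodConv Δ (S ≫ φ) φ = coprodConvUnit ε X :=
  calc coprodConv Δ (S ≫ φ) φ = coprodConv Δ S (𝟙 H) ≫ φ := by
        rw [coprodConv_comp, Category.id_comp]
    _ = coprodConvUnit ε X := by
        rw [coprodConv, hantipode_l, ← coprodConvUnit, coprodConvUnit_comp]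

lemma coprodConv_self_antipode_comp {S : H ⟶ H}
    (hantipode_r : Δ ≫ coprod.desc (𝟙 H) S = ε ≫ initial.to H) (φ : H ⟶ X) :
    coprodConv Δ φ (S ≫ φ) = coprodConvUnit ε X :=
  calc coprodConv Δ φ (S ≫ φ) = coprodConv Δ (𝟙 H) S ≫ φ := by
        rw [coprodConv_comp, Category.id_comp]
    _ = coprodConvUnit ε X := by
        rw [coprodConv, hantipode_r, ← coprodConvUnit, coprodConvUnit_comp]

lemma coprodConv_left_inv_eq_right_inv
    (hcoassoc : Δ ≫ coprod.map Δ (𝟙 H) ≫ (coprod.associator H H H).hom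
      = Δ ≫ coprod.map (𝟙 H) Δ)
    (hcounit_l : Δ ≫ coprod.desc (ε ≫ initial.to H) (𝟙 H) = 𝟙 H)
    (hcounit_r : Δ ≫ coprod.desc (𝟙 H) (ε ≫ initial.to H) = 𝟙 H) {a b c : H ⟶ X}
    (hba : coprodConv Δ b a = coprodConvUnit ε X) (hac : coprodConv Δ a c = coprodConvUnit ε X) :
    b = c :=
  calc b = coprodConv Δ b (coprodConv Δ a c) := by rw [hac, coprodConv_coprodConvUnit hcounit_r]
    _ = coprodConv Δ (coprodConv Δ b a) c := (coprodConv_assoc hcoassoc _ _ _).symm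
    _ = c := by rw [hba, coprodConvUnit_coprodConv hcounit_l]

end Convolution

/-- For a Zhang algebra `(H, Δ, ε, S)` in a category with an initial object
and binary coproducts, the antipode is an anti-comorphism: `τ ∘ (S ⊔ S) ∘ Δ = Δ ∘ S`, where
`τ = ι₂ ⊔̇ ι₁ : H ⊔ H → H ⊔ H` is the canonical symmetry exchanging the two factors. -/
theorem zhang_antipode_anticomorphism
    {C : Type u} [Category.{v} C] [HasInitial C] [HasBinaryCoproducts C]
    (H : C) (Δ : H ⟶ H ⨿ H) (ε : H ⟶ ⊥_ C) (S : H ⟶ H)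
    (hcoassoc : Δ ≫ coprod.map Δ (𝟙 H) ≫ (coprod.associator H H H).hom
      = Δ ≫ coprod.map (𝟙 H) Δ)
    (hcounit_l : Δ ≫ coprod.desc (ε ≫ initial.to H) (𝟙 H) = 𝟙 H)
    (hcounit_r : Δ ≫ coprod.desc (𝟙 H) (ε ≫ initial.to H) = 𝟙 H)
    (hantipode_l : Δ ≫ coprod.desc S (𝟙 H) = ε ≫ initial.to H)
    (hantipode_r : Δ ≫ coprod.desc (𝟙 H) S = ε ≫ initial.to H) :
    Δ ≫ coprod.map S S ≫ coprod.desc coprod.inr coprod.inl = S ≫ Δ := by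
  have hswap : Δ ≫ coprod.map S S ≫ coprod.desc coprod.inr coprod.inl
      = coprodConv Δ (S ≫ coprod.inr) (S ≫ coprod.inl) := by
    simp [coprodConv]
  have hleft : coprodConv Δ (coprodConv Δ (S ≫ coprod.inr) (S ≫ coprod.inl)) Δ
      = coprodConvUnit ε (H ⨿ H) := by
    calc _ = coprodConv Δ (coprodConv Δ (S ≫ coprod.inr) (S ≫ coprod.inl))
              (coprodConv Δ coprod.inl coprod.inr) := by
          rw [coprodConv_inl_inr]
      _ = coprodConv Δ (S ≫ coprod.inr) (coprodConv Δ
              (coprodConv Δ (S ≫ coprod.inl) coprod.inl) coprod.inr) := by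
          rw [coprodConv_assoc hcoassoc, ← coprodConv_assoc hcoassoc (S ≫ coprod.inl)]
      _ = coprodConvUnit ε (H ⨿ H) := by
          rw [coprodConv_antipode_comp_self hantipode_l,
            coprodConvUnit_coprodConv hcounit_l, coprodConv_antipode_comp_self hantipode_l]
  rw [hswap]
  exact coprodConv_left_inv_eq_right_inv hcoassoc hcounit_l hcounit_r hleft
    (coprodConv_self_antipode_comp hantipode_r Δ)
end

section
/- Let C be a category with an initial object k and binary coproducts, and let (H, Δ, ε, S) be a Zhang algebra of C. Then the adjoint coaction Ω_c makes H an H-comodule: (id_H ⊔ Ω_c) ∘ Ω_c = (Δ ⊔ id_H) ∘ Ω_c as morphisms H → H ⊔ H ⊔ H (up to the canonical associativity isomorphism of iterated coproducts), and ((η_H ∘ ε) ⊔̇ id_H) ∘ Ω_c = id_H. -/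
/-!
For every object `X`, the convolution `f * g := Δ ≫ coprod.desc f g` makes `H ⟶ X` a group
with unit `ε ≫ initial.to X` and inverse `f ↦ S ≫ f`. Under
`(H ⨿ H ⟶ X) ≃ (H ⟶ X) × (H ⟶ X)`, precomposing with `Ω_c` is conjugation
`(u, v) ↦ u * v * u⁻¹`. Both comodule axioms thereby become group identities:
`a * (b * c * b⁻¹) * a⁻¹ = (a * b) * c * (a * b)⁻¹` for the three injections `a, b, c` into
`H ⨿ (H ⨿ H)`, and `1 * 𝟙 H * 1⁻¹ = 𝟙 H`.
-/

open CategoryTheory CategoryTheory.Limits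

universe u v

/-- The adjoint coaction `Ω_c := (ι₁ ⊔̇ ι₂ ⊔̇ ι₁) ∘ (id_{H⊔H} ⊔ S) ∘ (Δ ⊔ id_H) ∘ Δ` of a
Zhang algebra on itself; the first coproduct factor is the coacting copy of `H` and the
second is the comodule copy. -/
noncomputable def adjointCoaction {C : Type u} [Category.{v} C] [HasBinaryCoproducts C]
    (H : C) (Δ : H ⟶ H ⨿ H) (S : H ⟶ H) : H ⟶ H ⨿ H :=
  Δ ≫ coprod.map Δ (𝟙 H) ≫ coprod.map (𝟙 (H ⨿ H)) S ≫
    coprod.desc (coprod.desc coprod.inl coprod.inr) coprod.inl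

namespace ZhangAlgebra

variable {C : Type u} [Category.{v} C] [HasBinaryCoproducts C] {H : C}

section Convolution

variable (Δ : H ⟶ H ⨿ H)

noncomputable def conv {X : C} (f g : H ⟶ X) : H ⟶ X := Δ ≫ coprod.desc f g

lemma conv_assoc
    (hcoassoc : Δ ≫ coprod.map Δ (𝟙 H) ≫ (coprod.associator H H H).hom
      = Δ ≫ coprod.map (𝟙 H) Δ)
    {X : C} (f g h : H ⟶ X) :
    conv Δ (conv Δ f g) h = conv Δ f (conv Δ g h) := by
  simpa [conv, coprod.inl_desc, coprod.inr_desc, coprod.inl_desc_assoc, coprod.inr_desc_assoc]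
    using hcoassoc =≫ coprod.desc f (coprod.desc g h)

lemma adjointCoaction_comp (S : H ⟶ H) {X : C} (g : H ⨿ H ⟶ X) :
    adjointCoaction H Δ S ≫ g
      = conv Δ (conv Δ (coprod.inl ≫ g) (coprod.inr ≫ g)) (S ≫ coprod.inl ≫ g) := by
  simp only [adjointCoaction, conv, Category.assoc, coprod.map_desc, coprod.desc_comp,
    Category.id_comp]

end Convolution

section ConvolutionGroup

variable [HasInitial C] (Δ : H ⟶ H ⨿ H) (ε : H ⟶ ⊥_ C) (S : H ⟶ H)

lemma counit_conv (hcounit_l : Δ ≫ coprod.desc (ε ≫ initial.to H) (𝟙 H) = 𝟙 H)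
    {X : C} (g : H ⟶ X) :
    conv Δ (ε ≫ initial.to X) g = g := by
  simpa [conv] using hcounit_l =≫ g

lemma antipode_conv (hantipode_l : Δ ≫ coprod.desc S (𝟙 H) = ε ≫ initial.to H)
    {X : C} (f : H ⟶ X) :
    conv Δ (S ≫ f) f = ε ≫ initial.to X := by
  simpa [conv] using hantipode_l =≫ f

noncomputable abbrev convGroup
    (hcoassoc : Δ ≫ coprod.map Δ (𝟙 H) ≫ (coprod.associator H H H).hom
      = Δ ≫ coprod.map (𝟙 H) Δ)
    (hcounit_l : Δ ≫ coprod.desc (ε ≫ initial.to H) (𝟙 H) = 𝟙 H)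
    (hantipode_l : Δ ≫ coprod.desc S (𝟙 H) = ε ≫ initial.to H)
    (X : C) : Group (H ⟶ X) :=
  letI : Mul (H ⟶ X) := ⟨conv Δ⟩
  letI : One (H ⟶ X) := ⟨ε ≫ initial.to X⟩
  letI : Inv (H ⟶ X) := ⟨(S ≫ ·)⟩
  Group.ofLeftAxioms (conv_assoc Δ hcoassoc)
    (counit_conv Δ ε hcounit_l) (antipode_conv Δ ε S hantipode_l)

end ConvolutionGroup

end ZhangAlgebra

open ZhangAlgebra in
theorem zhang_adjointCoaction_comodule_general
    {C : Type u} [Category.{v} C] [HasInitial C] [HasBinaryCoproducts C]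
    (H : C) (Δ : H ⟶ H ⨿ H) (ε : H ⟶ ⊥_ C) (S : H ⟶ H)
    (hcoassoc : Δ ≫ coprod.map Δ (𝟙 H) ≫ (coprod.associator H H H).hom
      = Δ ≫ coprod.map (𝟙 H) Δ)
    (hcounit_l : Δ ≫ coprod.desc (ε ≫ initial.to H) (𝟙 H) = 𝟙 H)
    (hantipode_l : Δ ≫ coprod.desc S (𝟙 H) = ε ≫ initial.to H) :
    (adjointCoaction H Δ S ≫ coprod.map (𝟙 H) (adjointCoaction H Δ S)
      = adjointCoaction H Δ S ≫ coprod.map Δ (𝟙 H) ≫ (coprod.associator H H H).hom) ∧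
    (adjointCoaction H Δ S ≫ coprod.desc (ε ≫ initial.to H) (𝟙 H) = 𝟙 H) := by
  constructor
  · let _ := convGroup Δ ε S hcoassoc hcounit_l hantipode_l (H ⨿ (H ⨿ H))
    have conj (g : H ⨿ H ⟶ H ⨿ (H ⨿ H)) : adjointCoaction H Δ S ≫ g
        = (coprod.inl ≫ g) * (coprod.inr ≫ g) * (coprod.inl ≫ g)⁻¹ :=
      adjointCoaction_comp Δ S g
    let a : H ⟶ H ⨿ (H ⨿ H) := coprod.inl
    let b : H ⟶ H ⨿ (H ⨿ H) := coprod.inl ≫ coprod.inr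
    let c : H ⟶ H ⨿ (H ⨿ H) := coprod.inr ≫ coprod.inr
    calc _ = a * (b * c * b⁻¹) * a⁻¹ := by
          simp only [conj, coprod.inl_map, coprod.inr_map, Category.id_comp]
          rfl
      _ = (a * b) * c * (a * b)⁻¹ := by group
      _ = _ := by
          simp only [conj, coprod.inl_map_assoc, coprod.inr_map_assoc, Category.id_comp,
            coprod.associator_hom, coprod.inl_desc, coprod.inr_desc]
          rfl
  · let _ := convGroup Δ ε S hcoassoc hcounit_l hantipode_l H
    calc _ = (1 : H ⟶ H) * 𝟙 H * (1 : H ⟶ H)⁻¹ := by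
          simp only [adjointCoaction_comp, coprod.inl_desc, coprod.inr_desc]
          rfl
      _ = 𝟙 H := by group

/-- For a Zhang algebra `(H, Δ, ε, S)`, the adjoint coaction `Ω_c` makes `H`
an `H`-comodule: `(id_H ⊔ Ω_c) ∘ Ω_c = (Δ ⊔ id_H) ∘ Ω_c` (up to the canonical associativity
isomorphism) and `((η_H ∘ ε) ⊔̇ id_H) ∘ Ω_c = id_H`. -/
theorem zhang_adjointCoaction_comodule
    {C : Type u} [Category.{v} C] [HasInitial C] [HasBinaryCoproducts C]
    (H : C) (Δ : H ⟶ H ⨿ H) (ε : H ⟶ ⊥_ C) (S : H ⟶ H)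
    (hcoassoc : Δ ≫ coprod.map Δ (𝟙 H) ≫ (coprod.associator H H H).hom
      = Δ ≫ coprod.map (𝟙 H) Δ)
    (hcounit_l : Δ ≫ coprod.desc (ε ≫ initial.to H) (𝟙 H) = 𝟙 H)
    (hcounit_r : Δ ≫ coprod.desc (𝟙 H) (ε ≫ initial.to H) = 𝟙 H)
    (hantipode_l : Δ ≫ coprod.desc S (𝟙 H) = ε ≫ initial.to H)
    (hantipode_r : Δ ≫ coprod.desc (𝟙 H) S = ε ≫ initial.to H) :
    (adjointCoaction H Δ S ≫ coprod.map (𝟙 H) (adjointCoaction H Δ S)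
      = adjointCoaction H Δ S ≫ coprod.map Δ (𝟙 H) ≫ (coprod.associator H H H).hom) ∧
    (adjointCoaction H Δ S ≫ coprod.desc (ε ≫ initial.to H) (𝟙 H) = 𝟙 H) :=
  zhang_adjointCoaction_comodule_general H Δ ε S hcoassoc hcounit_l hantipode_l
end

section
/- Let C be a category with an initial object k and binary coproducts, (H, Δ, ε, S) a Zhang algebra of C, and (M, Ω_M), (N, Ω_N) two right H-comodule algebras. Let ι_M, ι_N, ι_H denote the canonical morphisms of M, N and H into M ⊔ N ⊔ H, and define Ω_{M⊔N} := (ι_M ⊔̇ ι_H ⊔̇ ι_N ⊔̇ ι_H) ∘ (Ω_M ⊔ Ω_N) : M ⊔ N → M ⊔ N ⊔ H, where Ω_M ⊔ Ω_N : M ⊔ N → (M ⊔ H) ⊔ (N ⊔ H). Then (M ⊔ N, Ω_{M⊔N}) is a right H-comodule algebra, i.e., (Ω_{M⊔N} ⊔ id_H) ∘ Ω_{M⊔N} = (id_{M⊔N} ⊔ Δ) ∘ Ω_{M⊔N} (up to the canonical associativity isomorphism) and (id_{M⊔N} ⊔̇ (η_{M⊔N} ∘ ε)) ∘ Ω_{M⊔N}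 = id_{M⊔N}. -/
/-!
A morphism `f : M → P` intertwining coactions, `f ≫ Ω_P = Ω_M ≫ (f ⊔ id_H)`, carries the
coassociativity and counit equations of `Ω_M` to those of `Ω_P` precomposed with `f`. Both
inclusions into `M ⊔ N` intertwine `Ω_M`, resp. `Ω_N`, with `Ω_{M⊔N}`, and they are jointly
epimorphic, so the equations for `Ω_{M⊔N}` follow.
-/

open CategoryTheory CategoryTheory.Limits

universe u v

/-- The coaction `Ω_{M⊔N} := (ι_M ⊔̇ ι_H ⊔̇ ι_N ⊔̇ ι_H) ∘ (Ω_M ⊔ Ω_N)` on the coproduct of two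
right `H`-comodule algebras `(M, Ω_M)` and `(N, Ω_N)`. -/
noncomputable def coprodCoaction {C : Type u} [Category.{v} C] [HasBinaryCoproducts C]
    {M N H : C} (ΩM : M ⟶ M ⨿ H) (ΩN : N ⟶ N ⨿ H) : M ⨿ N ⟶ (M ⨿ N) ⨿ H :=
  coprod.map ΩM ΩN ≫
    coprod.desc
      (coprod.desc (coprod.inl ≫ coprod.inl) coprod.inr)
      (coprod.desc (coprod.inr ≫ coprod.inl) coprod.inr)

section Coaction

variable {C : Type u} [Category.{v} C] [HasBinaryCoproducts C] {M N P H : C}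

lemma inl_coprodCoaction (ΩM : M ⟶ M ⨿ H) (ΩN : N ⟶ N ⨿ H) :
    coprod.inl ≫ coprodCoaction ΩM ΩN = ΩM ≫ coprod.map coprod.inl (𝟙 H) := by
  simp only [coprodCoaction, coprod.inl_map_assoc, coprod.inl_desc]
  congr 1
  ext
  · simp only [coprod.inl_desc, coprod.inl_map]
  · simp only [coprod.inr_desc, coprod.inr_map, Category.id_comp]

lemma inr_coprodCoaction (ΩM : M ⟶ M ⨿ H) (ΩN : N ⟶ N ⨿ H) :
    coprod.inr ≫ coprodCoaction ΩM ΩN = ΩN ≫ coprod.map coprod.inr (𝟙 H) := by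
  simp only [coprodCoaction, coprod.inr_map_assoc, coprod.inr_desc]
  congr 1
  ext
  · simp only [coprod.inl_desc, coprod.inl_map]
  · simp only [coprod.inr_desc, coprod.inr_map, Category.id_comp]

lemma comp_coassoc_of_intertwines (Δ : H ⟶ H ⨿ H) {ΩM : M ⟶ M ⨿ H} {ΩP : P ⟶ P ⨿ H}
    {f : M ⟶ P} (hf : f ≫ ΩP = ΩM ≫ coprod.map f (𝟙 H))
    (hM : ΩM ≫ coprod.map ΩM (𝟙 H) ≫ (coprod.associator M H H).hom
      = ΩM ≫ coprod.map (𝟙 M) Δ) :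
    f ≫ ΩP ≫ coprod.map ΩP (𝟙 H) ≫ (coprod.associator P H H).hom
      = f ≫ ΩP ≫ coprod.map (𝟙 P) Δ :=
  calc f ≫ ΩP ≫ coprod.map ΩP (𝟙 H) ≫ (coprod.associator P H H).hom
      = ΩM ≫ coprod.map ΩM (𝟙 H) ≫ coprod.map (coprod.map f (𝟙 H)) (𝟙 H)
          ≫ (coprod.associator P H H).hom := by
        simp only [reassoc_of% hf, coprod.map_map_assoc, Category.comp_id, hf]
    _ = ΩM ≫ coprod.map ΩM (𝟙 H) ≫ (coprod.associator M H H).hom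
          ≫ coprod.map f (coprod.map (𝟙 H) (𝟙 H)) := by
        rw [coprod.associator_naturality]
    _ = ΩM ≫ coprod.map (𝟙 M) Δ ≫ coprod.map f (𝟙 (H ⨿ H)) := by
        rw [reassoc_of% hM, coprod.map_id_id]
    _ = f ≫ ΩP ≫ coprod.map (𝟙 P) Δ := by
        rw [reassoc_of% hf, coprod.map_map, coprod.map_map]
        simp only [Category.id_comp, Category.comp_id]

variable [HasInitial C]

lemma comp_counit_of_intertwines (ε : H ⟶ ⊥_ C) {ΩM : M ⟶ M ⨿ H} {ΩP : P ⟶ P ⨿ H}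
    {f : M ⟶ P} (hf : f ≫ ΩP = ΩM ≫ coprod.map f (𝟙 H))
    (hM : ΩM ≫ coprod.desc (𝟙 M) (ε ≫ initial.to M) = 𝟙 M) :
    f ≫ ΩP ≫ coprod.desc (𝟙 P) (ε ≫ initial.to P) = f :=
  calc f ≫ ΩP ≫ coprod.desc (𝟙 P) (ε ≫ initial.to P)
      = ΩM ≫ coprod.desc (𝟙 M) (ε ≫ initial.to M) ≫ f := by
        simp [reassoc_of% hf, initial.to_comp]
    _ = f := by rw [reassoc_of% hM]

end Coaction

theorem coprod_of_comodules_is_comodule_general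
    {C : Type u} [Category.{v} C] [HasInitial C] [HasBinaryCoproducts C]
    (H : C) (Δ : H ⟶ H ⨿ H) (ε : H ⟶ ⊥_ C)
    (M N : C) (ΩM : M ⟶ M ⨿ H) (ΩN : N ⟶ N ⨿ H)
    (hM_coassoc : ΩM ≫ coprod.map ΩM (𝟙 H) ≫ (coprod.associator M H H).hom
      = ΩM ≫ coprod.map (𝟙 M) Δ)
    (hM_counit : ΩM ≫ coprod.desc (𝟙 M) (ε ≫ initial.to M) = 𝟙 M)
    (hN_coassoc : ΩN ≫ coprod.map ΩN (𝟙 H) ≫ (coprod.associator N H H).hom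
      = ΩN ≫ coprod.map (𝟙 N) Δ)
    (hN_counit : ΩN ≫ coprod.desc (𝟙 N) (ε ≫ initial.to N) = 𝟙 N) :
    (coprodCoaction ΩM ΩN ≫ coprod.map (coprodCoaction ΩM ΩN) (𝟙 H)
        ≫ (coprod.associator (M ⨿ N) H H).hom
      = coprodCoaction ΩM ΩN ≫ coprod.map (𝟙 (M ⨿ N)) Δ) ∧
    (coprodCoaction ΩM ΩN ≫ coprod.desc (𝟙 (M ⨿ N)) (ε ≫ initial.to (M ⨿ N))
      = 𝟙 (M ⨿ N)) := by
  have hinl := inl_coprodCoaction ΩM ΩN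
  have hinr := inr_coprodCoaction ΩM ΩN
  constructor
  · ext1
    · exact comp_coassoc_of_intertwines Δ hinl hM_coassoc
    · exact comp_coassoc_of_intertwines Δ hinr hN_coassoc
  · ext1
    · rw [Category.comp_id]
      exact comp_counit_of_intertwines ε hinl hM_counit
    · rw [Category.comp_id]
      exact comp_counit_of_intertwines ε hinr hN_counit

/-- If `(M, Ω_M)` and `(N, Ω_N)` are right `H`-comodule algebras over a
Zhang algebra `(H, Δ, ε, S)`, then `(M ⊔ N, Ω_{M⊔N})` is a right `H`-comodule algebra. -/
theorem coprod_of_comodules_is_comodule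
    {C : Type u} [Category.{v} C] [HasInitial C] [HasBinaryCoproducts C]
    (H : C) (Δ : H ⟶ H ⨿ H) (ε : H ⟶ ⊥_ C) (S : H ⟶ H)
    (hcoassoc : Δ ≫ coprod.map Δ (𝟙 H) ≫ (coprod.associator H H H).hom
      = Δ ≫ coprod.map (𝟙 H) Δ)
    (hcounit_l : Δ ≫ coprod.desc (ε ≫ initial.to H) (𝟙 H) = 𝟙 H)
    (hcounit_r : Δ ≫ coprod.desc (𝟙 H) (ε ≫ initial.to H) = 𝟙 H)
    (hantipode_l : Δ ≫ coprod.desc S (𝟙 H) = ε ≫ initial.to H)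
    (hantipode_r : Δ ≫ coprod.desc (𝟙 H) S = ε ≫ initial.to H)
    (M N : C) (ΩM : M ⟶ M ⨿ H) (ΩN : N ⟶ N ⨿ H)
    (hM_coassoc : ΩM ≫ coprod.map ΩM (𝟙 H) ≫ (coprod.associator M H H).hom
      = ΩM ≫ coprod.map (𝟙 M) Δ)
    (hM_counit : ΩM ≫ coprod.desc (𝟙 M) (ε ≫ initial.to M) = 𝟙 M)
    (hN_coassoc : ΩN ≫ coprod.map ΩN (𝟙 H) ≫ (coprod.associator N H H).hom
      = ΩN ≫ coprod.map (𝟙 N) Δ)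
    (hN_counit : ΩN ≫ coprod.desc (𝟙 N) (ε ≫ initial.to N) = 𝟙 N) :
    (coprodCoaction ΩM ΩN ≫ coprod.map (coprodCoaction ΩM ΩN) (𝟙 H)
        ≫ (coprod.associator (M ⨿ N) H H).hom
      = coprodCoaction ΩM ΩN ≫ coprod.map (𝟙 (M ⨿ N)) Δ) ∧
    (coprodCoaction ΩM ΩN ≫ coprod.desc (𝟙 (M ⨿ N)) (ε ≫ initial.to (M ⨿ N))
      = 𝟙 (M ⨿ N)) :=
  coprod_of_comodules_is_comodule_general H Δ ε M N ΩM ΩN hM_coassoc hM_counit hN_coassoc hN_counit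
end

section
/- Let C be a category with an initial object k and binary coproducts, and let (H, Δ, ε, S) be a Zhang algebra of C. Then the counit is compatible with the adjoint coaction: (id_H ⊔̇ (η_H ∘ ε)) ∘ Ω_c = η_H ∘ ε, i.e., collapsing the second coproduct factor of Ω_c via ε (followed by the unique morphism k → H) yields the trivial morphism η_H ∘ ε : H → H. -/
open CategoryTheory CategoryTheory.Limits

universe u v

/-- `e` absorbs the middle factor of `Ω_c`, and the counit law merges the first two back into `id_H`. -/
theorem adjointCoaction_comp_desc_id_of_rightCounit {C : Type u} [Category.{v} C]
    [HasBinaryCoproducts C] (H : C) (Δ : H ⟶ H ⨿ H) (S e : H ⟶ H)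
    (hcounit : Δ ≫ coprod.desc (𝟙 H) e = 𝟙 H) :
    adjointCoaction H Δ S ≫ coprod.desc (𝟙 H) e = Δ ≫ coprod.desc (𝟙 H) S := by
  simp only [adjointCoaction, Category.assoc, coprod.map_desc, coprod.desc_comp,
    coprod.inl_desc, coprod.inr_desc, Category.comp_id, Category.id_comp, hcounit]

theorem zhang_counit_adjointCoaction_general
    {C : Type u} [Category.{v} C] [HasInitial C] [HasBinaryCoproducts C]
    (H : C) (Δ : H ⟶ H ⨿ H) (ε : H ⟶ ⊥_ C) (S : H ⟶ H)
    (hcounit_r : Δ ≫ coprod.desc (𝟙 H) (ε ≫ initial.to H) = 𝟙 H)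
    (hantipode_r : Δ ≫ coprod.desc (𝟙 H) S = ε ≫ initial.to H) :
    adjointCoaction H Δ S ≫ coprod.desc (𝟙 H) (ε ≫ initial.to H)
      = ε ≫ initial.to H := by
  rw [adjointCoaction_comp_desc_id_of_rightCounit H Δ S _ hcounit_r, hantipode_r]

/-- For a Zhang algebra `(H, Δ, ε, S)`, the counit is compatible with the
adjoint coaction: `(id_H ⊔̇ (η_H ∘ ε)) ∘ Ω_c = η_H ∘ ε`. -/
theorem zhang_counit_adjointCoaction
    {C : Type u} [Category.{v} C] [HasInitial C] [HasBinaryCoproducts C]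
    (H : C) (Δ : H ⟶ H ⨿ H) (ε : H ⟶ ⊥_ C) (S : H ⟶ H)
    (hcoassoc : Δ ≫ coprod.map Δ (𝟙 H) ≫ (coprod.associator H H H).hom
      = Δ ≫ coprod.map (𝟙 H) Δ)
    (hcounit_l : Δ ≫ coprod.desc (ε ≫ initial.to H) (𝟙 H) = 𝟙 H)
    (hcounit_r : Δ ≫ coprod.desc (𝟙 H) (ε ≫ initial.to H) = 𝟙 H)
    (hantipode_l : Δ ≫ coprod.desc S (𝟙 H) = ε ≫ initial.to H)
    (hantipode_r : Δ ≫ coprod.desc (𝟙 H) S = ε ≫ initial.to H) :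
    adjointCoaction H Δ S ≫ coprod.desc (𝟙 H) (ε ≫ initial.to H)
      = ε ≫ initial.to H :=
  zhang_counit_adjointCoaction_general H Δ ε S hcounit_r hantipode_r
end

section
/- Let (C, ⊗, E, α, ℓ, r) be a monoidal category endowed with a pair of inclusions (ι¹, ι²) that is compatible with the unit constraints. Then the unit object E is initial in C (for every object A there is exactly one morphism η_A : E → A), and moreover ι¹_{A,B} = (id_A ⊗ η_B) ∘ r_A⁻¹ and ι²_{A,B} = (η_A ⊗ id_B) ∘ ℓ_B⁻¹ for all objects A, B. -/
/-!
Compatibility with the unit constraints forces `ι¹_{A,E} = r_A⁻¹` and `ι²_{E,B} = ℓ_B⁻¹`, so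
naturality of `ι¹` in its second argument along `η : E ⟶ B` gives the formula for `ι¹_{A,B}`, and
symmetrically for `ι²`. Taking `A = E` in the formula for `ι¹` and using `r_E = ℓ_E`, naturality
of `ℓ` turns it into `ι¹_{E,B} = η ≫ ℓ_B⁻¹`: every `η : E ⟶ B` equals `ι¹_{E,B} ≫ ℓ_B`.
-/

open CategoryTheory MonoidalCategory

universe u v

namespace CategoryTheory.MonoidalCategory

variable {C : Type u} [Category.{v} C] [MonoidalCategory C]

lemma inclusion₁_eq_rightUnitor_inv_comp (ι₁ : ∀ A B : C, A ⟶ A ⊗ B)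
    (nat₁ : ∀ {A₁ B₁ A₂ B₂ : C} (f : A₁ ⟶ B₁) (g : A₂ ⟶ B₂),
      ι₁ A₁ A₂ ≫ (f ⊗ₘ g) = f ≫ ι₁ B₁ B₂)
    (compat_r : ∀ A : C, ι₁ A (𝟙_ C) ≫ (ρ_ A).hom = 𝟙 A) (A B : C) (η : 𝟙_ C ⟶ B) :
    ι₁ A B = (ρ_ A).inv ≫ (𝟙 A ⊗ₘ η) := by
  rw [← (Iso.comp_hom_eq_id (ρ_ A)).mp (compat_r A), nat₁, Category.id_comp]

lemma inclusion₂_eq_leftUnitor_inv_comp (ι₂ : ∀ A B : C, B ⟶ A ⊗ B)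
    (nat₂ : ∀ {A₁ B₁ A₂ B₂ : C} (f : A₁ ⟶ B₁) (g : A₂ ⟶ B₂),
      ι₂ A₁ A₂ ≫ (f ⊗ₘ g) = g ≫ ι₂ B₁ B₂)
    (compat_l : ∀ A : C, ι₂ (𝟙_ C) A ≫ (λ_ A).hom = 𝟙 A) (A B : C) (η : 𝟙_ C ⟶ A) :
    ι₂ A B = (λ_ B).inv ≫ (η ⊗ₘ 𝟙 B) := by
  rw [← (Iso.comp_hom_eq_id (λ_ B)).mp (compat_l B), nat₂, Category.id_comp]

lemma eq_of_rightUnitor_inv_comp_eq {A : C} {g : 𝟙_ C ⟶ 𝟙_ C ⊗ A} {η : 𝟙_ C ⟶ A}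
    (h : g = (ρ_ (𝟙_ C)).inv ≫ (𝟙 (𝟙_ C) ⊗ₘ η)) : η = g ≫ (λ_ A).hom := by
  rw [h, ← unitors_inv_equal, id_tensorHom, ← leftUnitor_inv_naturality, Category.assoc,
    Iso.inv_hom_id, Category.comp_id]

end CategoryTheory.MonoidalCategory

/-- Let `(C, ⊗, E, α, ℓ, r)` be a monoidal category endowed with a pair of
inclusions `(ι¹, ι²)` compatible with the unit constraints.  Then the unit object `E` is
initial (for every object `A` there is exactly one morphism `E ⟶ A`), and moreover
`ι¹_{A,B} = (id_A ⊗ η_B) ∘ r_A⁻¹` and `ι²_{A,B} = (η_A ⊗ id_B) ∘ ℓ_B⁻¹` for all `A, B`. -/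
theorem inclusions_compatible_imp_unit_initial
    {C : Type u} [Category.{v} C] [MonoidalCategory C]
    (ι₁ : ∀ A B : C, A ⟶ A ⊗ B) (ι₂ : ∀ A B : C, B ⟶ A ⊗ B)
    (nat₁ : ∀ {A₁ B₁ A₂ B₂ : C} (f : A₁ ⟶ B₁) (g : A₂ ⟶ B₂),
      ι₁ A₁ A₂ ≫ (f ⊗ₘ g) = f ≫ ι₁ B₁ B₂)
    (nat₂ : ∀ {A₁ B₁ A₂ B₂ : C} (f : A₁ ⟶ B₁) (g : A₂ ⟶ B₂),
      ι₂ A₁ A₂ ≫ (f ⊗ₘ g) = g ≫ ι₂ B₁ B₂)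
    (compat_l : ∀ A : C, ι₂ (𝟙_ C) A ≫ (λ_ A).hom = 𝟙 A)
    (compat_r : ∀ A : C, ι₁ A (𝟙_ C) ≫ (ρ_ A).hom = 𝟙 A) :
    (∀ A : C, ∃! _η : 𝟙_ C ⟶ A, True) ∧
    (∀ (A B : C) (η : 𝟙_ C ⟶ B), ι₁ A B = (ρ_ A).inv ≫ (𝟙 A ⊗ₘ η)) ∧
    (∀ (A B : C) (η : 𝟙_ C ⟶ A), ι₂ A B = (λ_ B).inv ≫ (η ⊗ₘ 𝟙 B)) := by
  have formula₁ := inclusion₁_eq_rightUnitor_inv_comp ι₁ nat₁ compat_r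
  have formula₂ := inclusion₂_eq_leftUnitor_inv_comp ι₂ nat₂ compat_l
  refine ⟨fun A => ⟨ι₁ (𝟙_ C) A ≫ (λ_ A).hom, trivial, fun η _ => ?_⟩,
    formula₁, formula₂⟩
  exact eq_of_rightUnitor_inv_comp_eq (formula₁ (𝟙_ C) A η)
end
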